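/- Let q > 1, H a subgroup of the group of Dirichlet characters modulo q, χ₁ a Dirichlet character modulo q, and a an integer coprime to q with multiplicative inverse ā mod q. Then ∑_{χ ∈ χ₁H} τ(χ)·χ(a) = χ₁(a)·#H·∑_{h ∈ ker H} χ₁(h·ā)·e(h·ā/q), where τ(χ) = ∑_{b mod q} χ(b)·e(b/q) is the Gauss sum and e(x) = exp(2πi x). -/

import Mathlib

open scoped Classical

open Finset Complex

noncomputable def e (x : ℝ) : ℂ := Complex.exp (2 * Real.pi * Complex.I * x)

/-- Gauss sum of a Dirichlet character mod `q`. -/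
noncomputable def gaussSum' (q : ℕ) [NeZero q] (χ : DirichletCharacter ℂ q) : ℂ :=
  ∑ b : ZMod q, χ b * e ((b.val : ℝ) / q)

/-!
Writing `b = h ā` in the Gauss sum gives `τ(χ) χ(a) = ∑_{h unit} χ(h) e(h ā / q)`. For
`χ = χ₁ψ` with `ψ ∈ H` this is `∑_h χ₁(h) e(h ā / q) ψ(h)`; summing over `ψ ∈ H` first,
orthogonality on the finite group `H` keeps exactly the units `h ∈ ker H`, each with weight
`#H`, and `χ₁(h) = χ₁(a) χ₁(h ā)`.
-/

namespace MulChar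

variable {R R' : Type*} [CommMonoid R]

@[simps]
def evalHom [CommMonoidWithZero R'] (u : Rˣ) : MulChar R R' →* R' where
  toFun χ := χ u
  map_one' := one_apply_coe u
  map_mul' _ _ := rfl

theorem sum_subgroup_apply_units [CommRing R'] [IsDomain R'] (H : Subgroup (MulChar R R'))
    [Fintype H] (u : Rˣ) :
    ∑ χ : H, (χ : MulChar R R') u = if ∀ χ ∈ H, χ u = 1 then (Nat.card H : R') else 0 := by
  have hsum := sum_hom_units ((evalHom u).comp H.subtype)
  have htriv : (evalHom u).comp H.subtype = 1 ↔ ∀ χ ∈ H, χ u = 1 := by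
    simp [MonoidHom.ext_iff]
  simpa only [htriv, Nat.card_eq_fintype_card, Nat.cast_ite, Nat.cast_zero,
    MonoidHom.comp_apply, Subgroup.coe_subtype, evalHom_apply] using hsum

theorem sum_mul_eq_sum_units [Fintype R] [DecidableEq R] [CommSemiring R'] (χ : MulChar R R')
    (f : R → R') :
    ∑ b, χ b * f b = ∑ u : Rˣ, χ u * f u :=
  (Fintype.sum_of_injective _ Units.val_injective _ _
    (fun b hb => by rw [map_nonunit χ fun hu => hb ⟨hu.unit, rfl⟩, zero_mul])
    fun _ => rfl).symm

end MulChar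

theorem gaussSum'_mul_apply (q : ℕ) [NeZero q] (χ : DirichletCharacter ℂ q) (a : (ZMod q)ˣ) :
    gaussSum' q χ * χ a =
      ∑ h : (ZMod q)ˣ, χ h * e ((((h * a⁻¹ : (ZMod q)ˣ) : ZMod q).val : ℝ) / q) := by
  rw [gaussSum', MulChar.sum_mul_eq_sum_units, sum_mul]
  symm
  apply Fintype.sum_equiv (Equiv.mulRight a⁻¹)
  intro h
  rw [Equiv.coe_mulRight, mul_right_comm, ← map_mul, ← Units.val_mul, inv_mul_cancel_right]

theorem dual_orthogonality_general (q : ℕ) [NeZero q]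
    (H : Subgroup (DirichletCharacter ℂ q)) [Fintype H]
    (χ₁ : DirichletCharacter ℂ q) (a : (ZMod q)ˣ) :
    ∑ χ : H, gaussSum' q (χ₁ * (χ : DirichletCharacter ℂ q)) *
        (χ₁ * (χ : DirichletCharacter ℂ q)) (a : ZMod q) =
      χ₁ (a : ZMod q) * (Nat.card H : ℂ) *
        ∑ h ∈ Finset.univ.filter (fun h : (ZMod q)ˣ => ∀ χ ∈ H, χ (h : ZMod q) = 1),
          χ₁ ((h : ZMod q) * ((a⁻¹ : (ZMod q)ˣ) : ZMod q)) *
            e ((((h : ZMod q) * ((a⁻¹ : (ZMod q)ˣ) : ZMod q)).val : ℝ) / q) := by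
  have hχ₁ (h : (ZMod q)ˣ) : χ₁ h = χ₁ a * χ₁ ((h : ZMod q) * ((a⁻¹ : (ZMod q)ˣ) : ZMod q)) := by
    rw [← map_mul, ← Units.val_mul, ← Units.val_mul, mul_inv_cancel_comm_assoc]
  simp_rw [gaussSum'_mul_apply, MulChar.mul_apply]
  rw [sum_comm]
  simp only [mul_right_comm (χ₁ _), ← mul_sum, MulChar.sum_subgroup_apply_units]
  rw [mul_sum, sum_filter]
  refine sum_congr rfl fun h _ => ?_
  split_ifs
  · rw [hχ₁, Units.val_mul]
    ring
  · rw [mul_zero]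

/-- Lemma on dual sums: `∑_{χ ∈ χ₁H} τ(χ)·χ(a) = χ₁(a)·#H·∑_{h ∈ ker H} χ₁(h·ā)·e(h·ā/q)`. -/
theorem dual_orthogonality (q : ℕ) [NeZero q] (hq : 1 < q)
    (H : Subgroup (DirichletCharacter ℂ q)) [Fintype H]
    (χ₁ : DirichletCharacter ℂ q) (a : (ZMod q)ˣ) :
    ∑ χ : H, gaussSum' q (χ₁ * (χ : DirichletCharacter ℂ q)) *
        (χ₁ * (χ : DirichletCharacter ℂ q)) (a : ZMod q) =
      χ₁ (a : ZMod q) * (Nat.card H : ℂ) *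
        ∑ h ∈ Finset.univ.filter (fun h : (ZMod q)ˣ => ∀ χ ∈ H, χ (h : ZMod q) = 1),
          χ₁ ((h : ZMod q) * ((a⁻¹ : (ZMod q)ˣ) : ZMod q)) *
            e ((((h : ZMod q) * ((a⁻¹ : (ZMod q)ˣ) : ZMod q)).val : ℝ) / q) :=
  dual_orthogonality_general q H χ₁ a
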